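/- Substituting (x,y) ← (y/x, 1/x) into the 1-form ω = (−θx + xy^2)dx + (θ^2 y − x^2 y)dy, where θ^3 = 1, and multiplying by x^4 gives θ·ω. That is, x^4·σ*ω = θω for σ(x,y) = (y/x, 1/x). -/

import Mathlib

open MvPolynomial

theorem pullback_dx_coeff {K : Type*} [Field K] (t x y : K) (hx : x ≠ 0) :
    x ^ 4 * ((-t * (y / x) + (y / x) * (1 / x) ^ 2) * (-y / x ^ 2) +
        (t ^ 2 * (1 / x) - (y / x) ^ 2 * (1 / x)) * (-(1 / x ^ 2)))
      = t * (-t * x + x * y ^ 2) := by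
  field_simp
  ring

theorem pullback_dy_coeff {K : Type*} [Field K] {t : K} (ht : t ^ 3 = 1) (x y : K)
    (hx : x ≠ 0) :
    x ^ 4 * ((-t * (y / x) + (y / x) * (1 / x) ^ 2) * (x / x ^ 2))
      = t * (t ^ 2 * y - x ^ 2 * y) := by
  field_simp
  linear_combination (-y) * ht

/-- For `ω = (-θx + xy²)dx + (θ²y - x²y)dy` with `θ³ = 1`, substituting
`σ(x,y) = (y/x, 1/x)` (with `dx ↦ (x dy - y dx)/x²`, `dy ↦ -dx/x²`) and multiplying by
`x⁴` gives `θ·ω`.  The computation takes place in the fraction field of `ℂ[x,y]`, and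
the equality is stated componentwise on `dx` and `dy`. -/
theorem stmt18 (θ : ℂ) (hθ : θ ^ 3 = 1) :
    ∀ x y : FractionRing (MvPolynomial (Fin 2) ℂ),
      x = algebraMap (MvPolynomial (Fin 2) ℂ) _ (X 0) →
      y = algebraMap (MvPolynomial (Fin 2) ℂ) _ (X 1) →
      -- `dx`-component:
      (x ^ 4 *
          ((-(algebraMap ℂ _ θ) * (y / x) + (y / x) * (1 / x) ^ 2) * (-y / x ^ 2) +
            (algebraMap ℂ _ (θ ^ 2) * (1 / x) - (y / x) ^ 2 * (1 / x)) * (-(1 / x ^ 2)))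
        = algebraMap ℂ _ θ * (-(algebraMap ℂ _ θ) * x + x * y ^ 2)) ∧
      -- `dy`-component:
      (x ^ 4 *
          ((-(algebraMap ℂ _ θ) * (y / x) + (y / x) * (1 / x) ^ 2) * (x / x ^ 2))
        = algebraMap ℂ _ θ * (algebraMap ℂ _ (θ ^ 2) * y - x ^ 2 * y)) := by
  rintro x y rfl -
  have hx :
      algebraMap (MvPolynomial (Fin 2) ℂ) (FractionRing (MvPolynomial (Fin 2) ℂ)) (X 0) ≠ 0 := by
    simp [X_ne_zero]
  have hθ' : algebraMap ℂ (FractionRing (MvPolynomial (Fin 2) ℂ)) θ ^ 3 = 1 := by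
    rw [← map_pow, hθ, map_one]
  rw [map_pow]
  exact ⟨pullback_dx_coeff _ _ _ hx, pullback_dy_coeff hθ' _ _ hx⟩
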